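/- Let j be a positive integer. Then the subgroup of GL(3,ℂ) generated by E, L₂ = diag(1, −1, −1) and −F_{0,j} (this is the group S₄(j)) has order 3·2^{j+2}. -/

import Mathlib

open Matrix

/-- The matrix `E` with entries `E₀₁ = E₁₂ = E₂₀ = 1` and all other entries `0`. -/
noncomputable def Ematrix : Matrix (Fin 3) (Fin 3) ℂ := !![0, 1, 0; 0, 0, 1; 1, 0, 0]

/-- The matrix `L₂ = diag(1, −1, −1)`. -/
noncomputable def L2matrix : Matrix (Fin 3) (Fin 3) ℂ := Matrix.diagonal ![1, -1, -1]

/-- The matrix `F_{m,j}`, with entries `−ξ` in positions `(0,2)`, `(1,1)`, `(2,0)` and `0`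
elsewhere, where `ξ = exp(2πi/(3^m·2^j))`. -/
noncomputable def Fmatrix (m j : ℕ) : Matrix (Fin 3) (Fin 3) ℂ :=
  (-(Complex.exp (2 * (Real.pi : ℂ) * Complex.I / ((3 : ℂ) ^ m * (2 : ℂ) ^ j)))) •
    (!![0, 0, 1; 0, 1, 0; 1, 0, 0] : Matrix (Fin 3) (Fin 3) ℂ)


/-!
Write `D ε` for the diagonal matrix of a sign vector `ε` and `ζ = exp (2πi / 2 ^ j)`, so that
`F = ζ • P` for the permutation matrix `P` of `i ↦ 2 - i`. Every element of the group has the form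
`F ^ k * E ^ a * D ε` with `k` modulo `2 ^ j`, `a` modulo `3` and `ε` one of the four sign vectors
with product one: this set is stable under right multiplication by the generators, because `D ε`
passes `E` and `F` at the cost of permuting `ε` and `E ^ a * F = F * E ^ (2 * a)`, and the
generators have finite order. These `2 ^ j · 3 · 4` normal forms are distinct: the underlying
permutation determines `a`, and equal diagonals `ζ ^ k ε = ζ ^ k' ε'` make `ε ε'` a constant sign
`s` with `s = s ^ 3 = ∏ ε ∏ ε' = 1`.
-/

open Equiv

namespace Matrix

variable {ι R : Type*} [Fintype ι] [DecidableEq ι] [Semiring R]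

theorem permMatrix_pow (σ : Perm ι) (k : ℕ) : σ.permMatrix R ^ k = (σ ^ k).permMatrix R := by
  induction k with
  | zero => simp
  | succ k ih => rw [pow_succ, ih, pow_succ', permMatrix_mul]

theorem permMatrix_mul_diagonal_apply (σ : Perm ι) (d : ι → R) (i j : ι) :
    (σ.permMatrix R * diagonal d) i j = if σ i = j then d j else 0 := by
  rw [PEquiv.toMatrix_toPEquiv_mul, submatrix_apply, id, diagonal_apply]
  split_ifs with h <;> simp [h]

theorem diagonal_mul_permMatrix (d : ι → R) (σ : Perm ι) :
    diagonal d * σ.permMatrix R = σ.permMatrix R * diagonal (d ∘ σ.symm) := by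
  ext i j
  rw [permMatrix_mul_diagonal_apply, PEquiv.mul_toMatrix_toPEquiv, submatrix_apply, id,
    diagonal_apply]
  simp only [Equiv.eq_symm_apply, Function.comp_apply]
  split_ifs with h
  · simp [← h]
  · rfl

theorem eq_and_eq_of_permMatrix_mul_diagonal_eq {σ τ : Perm ι} {d e : ι → R}
    (hd : ∀ i, d i ≠ 0) (h : σ.permMatrix R * diagonal d = τ.permMatrix R * diagonal e) :
    σ = τ ∧ d = e := by
  have hentry (i j : ι) := congrFun (congrFun h i) j
  simp only [permMatrix_mul_diagonal_apply] at hentry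
  have hστ : σ = τ := by
    ext i
    by_contra hne
    simpa [Ne.symm hne, hd] using hentry i (σ i)
  subst hστ
  exact ⟨rfl, funext fun j => by simpa using hentry (σ.symm j) j⟩

end Matrix

section SignDiagonal

variable {ι : Type*} [Fintype ι] [DecidableEq ι]

variable (R : Type*) [CommRing R] in
def signDiagonal : (ι → ℤˣ) →* GL ι R :=
  ((diagonalRingHom ι R : (ι → R) →* Matrix ι ι R).comp
    (MonoidHom.compLeft ((Int.castRingHom R : ℤ →* R).comp (Units.coeHom ℤ)) ι)).toHomUnits

@[simp]
theorem val_signDiagonal {R : Type*} [CommRing R] (ε : ι → ℤˣ) :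
    (signDiagonal R ε : Matrix ι ι R) = diagonal fun i => ((ε i : ℤ) : R) :=
  rfl

theorem signDiagonal_mul_of_val_eq_smul_permMatrix {R : Type*} [CommRing R] {g : GL ι R} {c : R}
    {σ : Perm ι} (hg : g.val = c • σ.permMatrix R) (ε : ι → ℤˣ) :
    signDiagonal R ε * g = g * signDiagonal R (ε ∘ σ.symm) := by
  ext1
  rw [Units.val_mul, Units.val_mul, hg, val_signDiagonal, val_signDiagonal, mul_smul_comm,
    diagonal_mul_permMatrix, smul_mul_assoc]
  rfl

end SignDiagonal

theorem intCast_units_injective {R : Type*} [CommRing R] [NeZero (2 : R)] :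
    Function.Injective fun u : ℤˣ => ((u : ℤ) : R) := by
  intro u v h
  rcases Int.units_eq_one_or u with rfl | rfl <;> rcases Int.units_eq_one_or v with rfl | rfl <;>
    simp_all
  · exact two_ne_zero (α := R) (by linear_combination h)
  · exact two_ne_zero (α := R) (by linear_combination -h)

theorem eq_and_eq_of_mul_intCast_units {ι K : Type*} [Fintype ι] [Field K] [NeZero (2 : K)]
    (hι : Odd (Fintype.card ι)) {x y : K} (hx : x ≠ 0) {ε δ : ι → ℤˣ} (hε : ∏ i, ε i = 1)
    (hδ : ∏ i, δ i = 1) (h : ∀ i, x * ((ε i : ℤ) : K) = y * ((δ i : ℤ) : K)) :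
    x = y ∧ ε = δ := by
  obtain ⟨i₀⟩ : Nonempty ι := Fintype.card_pos_iff.1 hι.pos
  have hxy (i : ι) : x * (((ε i * δ i : ℤˣ) : ℤ) : K) = y := by
    have hδ2 : ((δ i : ℤ) : K) * ((δ i : ℤ) : K) = 1 := by
      rw [← Int.cast_mul, ← Units.val_mul, Int.units_mul_self, Units.val_one, Int.cast_one]
    push_cast
    rw [← mul_assoc, h i, mul_assoc, hδ2, mul_one]
  have hconst (i : ι) : ε i * δ i = ε i₀ * δ i₀ :=
    intCast_units_injective (mul_left_cancel₀ hx ((hxy i).trans (hxy i₀).symm))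
  have hone : ε i₀ * δ i₀ = 1 := by
    calc ε i₀ * δ i₀ = (ε i₀ * δ i₀) ^ Fintype.card ι := by
          rw [Int.units_pow_eq_pow_mod_two, Nat.odd_iff.1 hι, pow_one]
      _ = ∏ i, ε i * δ i := by simp [hconst]
      _ = 1 := by rw [Finset.prod_mul_distrib, hε, hδ, one_mul]
  refine ⟨by simpa [hone] using hxy i₀, funext fun i => ?_⟩
  rw [← Int.units_inv_eq_self (δ i), ← mul_eq_one_iff_eq_inv, hconst, hone]

namespace S4j

abbrev DetOneSigns : Type := {ε : Fin 3 → ℤˣ // ∏ i, ε i = 1}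

theorem card_detOneSigns : Nat.card DetOneSigns = 4 := by
  rw [Nat.card_eq_fintype_card]
  decide

def signsL2 : Fin 3 → ℤˣ := ![1, -1, -1]

theorem eq_one_or_eq_signsL2_comp (ε : Fin 3 → ℤˣ) (hε : ∏ i, ε i = 1) :
    ε = 1 ∨ ε = signsL2 ∨ ε = signsL2 ∘ (finRotate 3).symm ∨
      ε = (signsL2 ∘ (finRotate 3).symm) ∘ (finRotate 3).symm := by
  revert ε
  decide

theorem finRotate_three_pow_val_injective :
    Function.Injective fun a : ZMod 3 => finRotate 3 ^ a.val := by
  decide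

section Generators

variable {R : Type*} [CommRing R] {n : ℕ} {ζ : R} {E L F : GL (Fin 3) R}

theorem pow_three_eq_one_of_val_eq (hE : E.val = (finRotate 3).permMatrix R) : E ^ 3 = 1 := by
  ext1
  rw [Units.val_pow_eq_pow_val, hE, permMatrix_pow, show finRotate 3 ^ 3 = 1 by decide,
    permMatrix_one, Units.val_one]

theorem pow_eq_one_of_val_eq (hn : Even n) (hζ : ζ ^ n = 1)
    (hF : F.val = ζ • (Fin.revPerm : Perm (Fin 3)).permMatrix R) : F ^ n = 1 := by
  obtain ⟨m, rfl⟩ := hn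
  ext1
  rw [Units.val_pow_eq_pow_val, hF, smul_pow, hζ, one_smul, permMatrix_pow, ← two_mul, pow_mul,
    show (Fin.revPerm : Perm (Fin 3)) ^ 2 = 1 by decide, one_pow, permMatrix_one, Units.val_one]

theorem pow_mul_eq_mul_pow_of_val_eq (hE : E.val = (finRotate 3).permMatrix R)
    (hF : F.val = ζ • (Fin.revPerm : Perm (Fin 3)).permMatrix R) (a : ℕ) :
    E ^ a * F = F * E ^ (2 * a) := by
  have hEF : SemiconjBy F (E ^ 2) E := by
    ext1
    rw [Units.val_mul, Units.val_mul, Units.val_pow_eq_pow_val, hE, hF, permMatrix_pow,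
      smul_mul_assoc, mul_smul_comm, ← permMatrix_mul, ← permMatrix_mul,
      show finRotate 3 ^ 2 * Fin.revPerm = Fin.revPerm * finRotate 3 by decide]
  rw [pow_mul]
  exact (hEF.pow_right a).eq.symm

theorem eq_signDiagonal_of_val_eq (hL : L.val = diagonal ![1, -1, -1]) :
    L = signDiagonal R signsL2 := by
  ext i j
  rw [hL, val_signDiagonal]
  fin_cases i <;> fin_cases j <;> simp [signsL2]

theorem val_pow_mul_pow_mul_signDiagonal (hE : E.val = (finRotate 3).permMatrix R)
    (hF : F.val = ζ • (Fin.revPerm : Perm (Fin 3)).permMatrix R) (k a : ℕ) (ε : Fin 3 → ℤˣ) :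
    (F ^ k * E ^ a * signDiagonal R ε).val =
      (finRotate 3 ^ a * Fin.revPerm ^ k).permMatrix R * diagonal fun i => ζ ^ k * ε i := by
  rw [Units.val_mul, Units.val_mul, Units.val_pow_eq_pow_val, Units.val_pow_eq_pow_val, hE, hF,
    smul_pow, permMatrix_pow, permMatrix_pow, smul_mul_assoc, permMatrix_mul, smul_mul_assoc,
    val_signDiagonal, ← mul_smul_comm, ← diagonal_smul]
  rfl

end Generators

section NormalForm

variable {R : Type*} [CommRing R] {n : ℕ} {ζ : R} {E L F : GL (Fin 3) R}

variable (n) in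
def normalWord (E F : GL (Fin 3) R) (x : ZMod n × ZMod 3 × DetOneSigns) : GL (Fin 3) R :=
  F ^ x.1.val * E ^ x.2.1.val * signDiagonal R x.2.2.1

theorem pow_mul_pow_mul_signDiagonal_mem_range (hE3 : E ^ 3 = 1) (hFn : F ^ n = 1)
    (k a : ℕ) {ε : Fin 3 → ℤˣ} (hε : ∏ i, ε i = 1) :
    F ^ k * E ^ a * signDiagonal R ε ∈ Set.range (normalWord n E F) :=
  ⟨((k : ZMod n), (a : ZMod 3), ⟨ε, hε⟩), by
    simp only [normalWord, ZMod.val_natCast, ← pow_eq_pow_mod _ hE3, ← pow_eq_pow_mod _ hFn]⟩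

theorem signDiagonal_mem_closure (hE : E.val = (finRotate 3).permMatrix R)
    (hL : L.val = diagonal ![1, -1, -1]) {ε : Fin 3 → ℤˣ} (hε : ∏ i, ε i = 1) :
    signDiagonal R ε ∈ Subgroup.closure {E, L, F} := by
  have hEmem : E ∈ Subgroup.closure {E, L, F} := Subgroup.subset_closure (by simp)
  have hconj {δ : Fin 3 → ℤˣ} (hδ : signDiagonal R δ ∈ Subgroup.closure {E, L, F}) :
      signDiagonal R (δ ∘ (finRotate 3).symm) ∈ Subgroup.closure {E, L, F} := by
    rw [eq_inv_mul_of_mul_eq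
      (signDiagonal_mul_of_val_eq_smul_permMatrix (c := 1) (by rw [hE, one_smul]) δ).symm]
    exact mul_mem (inv_mem hEmem) (mul_mem hδ hEmem)
  have hLmem : signDiagonal R signsL2 ∈ Subgroup.closure {E, L, F} :=
    eq_signDiagonal_of_val_eq hL ▸ Subgroup.subset_closure (by simp)
  rcases eq_one_or_eq_signsL2_comp ε hε with rfl | rfl | rfl | rfl
  · rw [map_one]
    exact one_mem _
  · exact hLmem
  · exact hconj hLmem
  · exact hconj (hconj hLmem)

theorem range_normalWord_subset_closure (hE : E.val = (finRotate 3).permMatrix R)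
    (hL : L.val = diagonal ![1, -1, -1]) :
    Set.range (normalWord n E F) ⊆ Subgroup.closure {E, L, F} := by
  rintro _ ⟨⟨k, a, ε, hε⟩, rfl⟩
  exact mul_mem (mul_mem (pow_mem (Subgroup.subset_closure (by simp)) _)
    (pow_mem (Subgroup.subset_closure (by simp)) _)) (signDiagonal_mem_closure hE hL hε)

theorem closure_subset_range_normalWord [NeZero n] (hn : Even n) (hζ : ζ ^ n = 1)
    (hE : E.val = (finRotate 3).permMatrix R) (hL : L.val = diagonal ![1, -1, -1])
    (hF : F.val = ζ • (Fin.revPerm : Perm (Fin 3)).permMatrix R) :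
    (Subgroup.closure {E, L, F} : Set (GL (Fin 3) R)) ⊆ Set.range (normalWord n E F) := by
  have hE3 := pow_three_eq_one_of_val_eq hE
  have hFn := pow_eq_one_of_val_eq hn hζ hF
  have hL' := eq_signDiagonal_of_val_eq hL
  have hfin : ∀ x ∈ ({E, L, F} : Set (GL (Fin 3) R)), IsOfFinOrder x := by
    rintro x (rfl | rfl | rfl)
    · exact isOfFinOrder_iff_pow_eq_one.2 ⟨3, by norm_num, hE3⟩
    · exact hL' ▸ (signDiagonal R).isOfFinOrder (isOfFinOrder_of_finite signsL2)
    · exact isOfFinOrder_iff_pow_eq_one.2 ⟨n, NeZero.pos n, hFn⟩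
  have hmem (k a : ℕ) {ε : Fin 3 → ℤˣ} (hε : ∏ i, ε i = 1) :=
    pow_mul_pow_mul_signDiagonal_mem_range hE3 hFn k a hε
  intro x hx
  rw [SetLike.mem_coe, ← Subgroup.mem_toSubmonoid,
    Subgroup.closure_toSubmonoid_of_isOfFinOrder hfin] at hx
  induction hx using Submonoid.closure_induction_right with
  | one => simpa using hmem 0 0 (ε := 1) (by simp)
  | mul_right x _ y hy ih =>
    obtain ⟨⟨k, a, ε, hε⟩, rfl⟩ := ih
    dsimp only [normalWord]
    rcases hy with hy | hy | hy <;> subst y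
    · rw [mul_assoc, signDiagonal_mul_of_val_eq_smul_permMatrix (c := 1) (by rw [hE, one_smul]),
        ← mul_assoc, mul_assoc (F ^ _), ← pow_succ]
      exact hmem _ _ ((Equiv.prod_comp _ ε).trans hε)
    · rw [hL', mul_assoc, ← map_mul]
      refine hmem _ _ ?_
      rw [Pi.mul_def, Finset.prod_mul_distrib, hε, one_mul]
      decide
    · rw [mul_assoc, signDiagonal_mul_of_val_eq_smul_permMatrix hF, ← mul_assoc,
        mul_assoc (F ^ _), pow_mul_eq_mul_pow_of_val_eq hE hF, ← mul_assoc, ← pow_succ]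
      exact hmem _ _ ((Equiv.prod_comp _ ε).trans hε)

end NormalForm

section Count

variable {K : Type*} [Field K] [NeZero (2 : K)] {n : ℕ} [NeZero n] {ζ : K}
  {E L F : GL (Fin 3) K}

theorem normalWord_injective (hζ : IsPrimitiveRoot ζ n) (hE : E.val = (finRotate 3).permMatrix K)
    (hF : F.val = ζ • (Fin.revPerm : Perm (Fin 3)).permMatrix K) :
    Function.Injective (normalWord n E F) := by
  rintro ⟨k, a, ε, hε⟩ ⟨k', a', ε', hε'⟩ h
  have hval := congrArg Units.val h
  simp only [normalWord] at hval
  rw [val_pow_mul_pow_mul_signDiagonal hE hF, val_pow_mul_pow_mul_signDiagonal hE hF] at hval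
  have hζk : ζ ^ k.val ≠ 0 := pow_ne_zero _ (hζ.ne_zero (NeZero.ne n))
  obtain ⟨hperm, hdiag⟩ := eq_and_eq_of_permMatrix_mul_diagonal_eq
    (fun i => mul_ne_zero hζk ((ε i).isUnit.map (Int.castRingHom K)).ne_zero) hval
  obtain ⟨hpow, rfl⟩ := eq_and_eq_of_mul_intCast_units (by decide) hζk hε hε' (congrFun hdiag)
  obtain rfl : k = k' := ZMod.val_injective n (hζ.pow_inj (ZMod.val_lt k) (ZMod.val_lt k') hpow)
  obtain rfl : a = a' := finRotate_three_pow_val_injective (mul_right_cancel hperm)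
  rfl

theorem card_closure (hn : Even n) (hζ : IsPrimitiveRoot ζ n)
    (hE : E.val = (finRotate 3).permMatrix K) (hL : L.val = diagonal ![1, -1, -1])
    (hF : F.val = ζ • (Fin.revPerm : Perm (Fin 3)).permMatrix K) :
    Nat.card (Subgroup.closure {E, L, F}) = 12 * n := by
  have hrange : (Subgroup.closure {E, L, F} : Set (GL (Fin 3) K)) = Set.range (normalWord n E F) :=
    (closure_subset_range_normalWord hn hζ.pow_eq_one hE hL hF).antisymm
      (range_normalWord_subset_closure hE hL)
  calc Nat.card (Subgroup.closure {E, L, F})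
      = Nat.card (Set.range (normalWord n E F)) := Nat.card_congr (Equiv.setCongr hrange)
    _ = Nat.card (ZMod n × ZMod 3 × DetOneSigns) :=
        Nat.card_range_of_injective (normalWord_injective hζ hE hF)
    _ = 12 * n := by
        rw [Nat.card_prod, Nat.card_prod, Nat.card_zmod, Nat.card_zmod, card_detOneSigns]
        ring

end Count

end S4j

/-- The group `S₄(j)`, generated by `E`, `L₂` and `−F_{0,j}` inside `GL(3,ℂ)`,
has order `3·2^{j+2}`. -/
theorem S4j_order (j : ℕ) (hj : 0 < j)
    (E L F : GL (Fin 3) ℂ)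
    (hE : E.val = Ematrix) (hL : L.val = L2matrix) (hF : F.val = -(Fmatrix 0 j)) :
    Nat.card ↥(Subgroup.closure ({E, L, F} : Set (GL (Fin 3) ℂ))) = 3 * 2 ^ (j + 2) := by
  have hE' : E.val = (finRotate 3).permMatrix ℂ := by
    rw [hE]
    ext i k
    fin_cases i <;> fin_cases k <;> simp [Ematrix]
  have hF' : F.val = Complex.exp (2 * Real.pi * Complex.I / (2 ^ j : ℕ)) •
      (Fin.revPerm : Perm (Fin 3)).permMatrix ℂ := by
    rw [hF, Fmatrix, neg_smul, neg_neg]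
    congr 1
    · push_cast
      ring_nf
    · ext i k
      fin_cases i <;> fin_cases k <;> simp
  rw [S4j.card_closure (Nat.even_pow.2 ⟨even_two, hj.ne'⟩)
    (Complex.isPrimitiveRoot_exp _ (by positivity)) hE' hL hF', pow_add]
  ring
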